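/- Let M be an extra-special p-group, K a finite group, W = M wr K the regular wreath product with base group B = ∏_{k∈K} M. Then Z(B) = B', and in the quotient B₀ = B/[B',K], the center satisfies Z(B₀) = B₀', so B₀ is a central product of the images of the direct factors. -/

import Mathlib

/-- A group is extra-special (for the prime `p`) if it is a `p`-group whose derived
subgroup and center coincide and have order `p`. -/
def IsExtraspecial (p : ℕ) (H : Type*) [Group H] : Prop :=
  IsPGroup p H ∧ commutator H = Subgroup.center H ∧ Nat.card (Subgroup.center H) = p

/-- The automorphism of the base group `B = K → M` of the regular wreath product
`M ≀ K` given by the (left regular) permutation action of `k ∈ K`. -/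
def shiftAut {K M : Type*} [Group K] [Group M] (k : K) : MulAut (K → M) where
  toFun f := fun t => f (k⁻¹ * t)
  invFun f := fun t => f (k * t)
  left_inv f := by funext t; simp [← mul_assoc]
  right_inv f := by funext t; simp [← mul_assoc]
  map_mul' f g := rfl

/-!
Since `M' = Z(M)`, both `B'` and `Z(B)` are the coordinatewise product `Z(M)^K`. Every generator
`b⁻¹ b^k` of `[B', K]` is a central vector whose coordinates multiply to `1` in the abelian group
`Z(M)`, so `[B', K]` meets each direct factor `M_k` trivially. Consequently `x̄` commutes with the
image of `M_k` in `B₀` only if `⁅x_k, a⁆ = 1` for all `a ∈ M`, which gives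
`Z(B₀) = Z(B)/[B', K] = B₀'`. Modulo `[B', K]` a central element of `M_k` is identified with the
same element of `M_{k'}`, which is what makes the images of the factors a central product.
-/

open scoped commutatorElement IsMulCommutative

theorem Pi.commutatorElement_mulSingle {ι : Type*} [DecidableEq ι] {G : ι → Type*}
    [∀ i, Group (G i)] (x : ∀ i, G i) (i : ι) (a : G i) :
    ⁅x, Pi.mulSingle i a⁆ = Pi.mulSingle i ⁅x i, a⁆ := by
  ext j
  rcases eq_or_ne j i with rfl | h <;> simp [commutatorElement_def, *]

theorem commutator_pi {ι : Type*} [Finite ι] {G : ι → Type*} [∀ i, Group (G i)] :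
    commutator (∀ i, G i) = Subgroup.pi Set.univ fun i => commutator (G i) := by
  simp only [commutator_def, ← Subgroup.pi_top Set.univ]
  exact Subgroup.commutator_pi_pi_of_finite _ _

theorem map_commutator_of_surjective {G H : Type*} [Group G] [Group H] (f : G →* H)
    (hf : Function.Surjective f) : (commutator G).map f = commutator H := by
  rw [map_commutator_eq, f.range_eq_top_of_surjective hf, commutator_def]

namespace Subgroup

variable {ι : Type*} [DecidableEq ι] {G : ι → Type*} [∀ i, Group (G i)] {H : Type*} [Group H]

theorem iSup_range_mulSingle [Finite ι] : ⨆ i, (MonoidHom.mulSingle G i).range = ⊤ := by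
  rw [eq_top_iff, ← pi_top Set.univ, pi_le_iff]
  intro i
  rw [← MonoidHom.range_eq_map]
  exact le_iSup (fun i => (MonoidHom.mulSingle G i).range) i

theorem iSup_map_range_mulSingle [Finite ι] {f : (∀ i, G i) →* H}
    (hf : Function.Surjective f) : ⨆ i, (MonoidHom.mulSingle G i).range.map f = ⊤ := by
  rw [← map_iSup, iSup_range_mulSingle, map_top_of_surjective f hf]

theorem commute_of_mem_map_range_mulSingle (f : (∀ i, G i) →* H) {i j : ι} (hij : i ≠ j)
    {x y : H} (hx : x ∈ (MonoidHom.mulSingle G i).range.map f)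
    (hy : y ∈ (MonoidHom.mulSingle G j).range.map f) : Commute x y := by
  obtain ⟨_, ⟨a, rfl⟩, rfl⟩ := hx
  obtain ⟨_, ⟨b, rfl⟩, rfl⟩ := hy
  exact (Pi.mulSingle_commute hij a b).map f

end Subgroup

section CenterProdOne

variable {M K : Type*} [Group M] [Fintype K]

variable (M K) in
def centerProdOne : Subgroup (K → M) :=
  (∏ t, Pi.evalMonoidHom (fun _ : K => Subgroup.center M) t).ker.map
    ((Subgroup.center M).subtype.compLeft K)

theorem eq_one_of_mulSingle_mem_centerProdOne [DecidableEq K] {k : K} {a : M}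
    (h : Pi.mulSingle k a ∈ centerProdOne M K) : a = 1 := by
  obtain ⟨β, hβ, hβa⟩ := h
  have hβt (t : K) : (β t : M) = (Pi.mulSingle k a : K → M) t := congrFun hβa t
  have hprod : ∏ t, β t = β k := Finset.prod_eq_single k
    (fun t _ ht => Subtype.ext (by simp [hβt, Pi.mulSingle_eq_of_ne ht])) (by simp)
  simp only [SetLike.mem_coe, MonoidHom.mem_ker, MonoidHom.finsetProd_apply,
    Pi.evalMonoidHom_apply, hprod] at hβ
  simpa [hβ, eq_comm] using hβt k

end CenterProdOne

section Shift

variable {M K : Type*} [Group M] [Group K]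

theorem shiftAut_apply (k : K) (f : K → M) (t : K) : shiftAut k f t = f (k⁻¹ * t) := rfl

theorem shiftAut_mulSingle [DecidableEq K] (g k : K) (a : M) :
    shiftAut g (Pi.mulSingle k a) = Pi.mulSingle (g * k) a := by
  ext t
  simp only [shiftAut_apply, Pi.mulSingle_apply, inv_mul_eq_iff_eq_mul]

variable (M K) in
/-- `[Z(B), K]` for the base group `B = K → M` of `M ≀ K`. -/
def centerShiftCommutator : Subgroup (K → M) :=
  Subgroup.closure {x | ∃ b ∈ Subgroup.center (K → M), ∃ k : K, x = b⁻¹ * shiftAut k b}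

theorem centerShiftCommutator_le_centerProdOne [Fintype K] :
    centerShiftCommutator M K ≤ centerProdOne M K := by
  rw [centerShiftCommutator, Subgroup.closure_le]
  rintro _ ⟨b, hb, k, rfl⟩
  rw [Subgroup.center_pi, Subgroup.mem_pi] at hb
  set β : K → Subgroup.center M := fun t => ⟨b t, hb t trivial⟩
  refine ⟨β⁻¹ * fun t => β (k⁻¹ * t), ?_, rfl⟩
  rw [SetLike.mem_coe, MonoidHom.mem_ker, map_mul, map_inv, inv_mul_eq_one]
  simp only [MonoidHom.finsetProd_apply, Pi.evalMonoidHom_apply]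
  exact (Equiv.prod_comp (Equiv.mulLeft k⁻¹) β).symm

theorem eq_one_of_mulSingle_mem_centerShiftCommutator [Finite K] [DecidableEq K] {k : K}
    {a : M} (h : Pi.mulSingle k a ∈ centerShiftCommutator M K) : a = 1 :=
  have := Fintype.ofFinite K
  eq_one_of_mulSingle_mem_centerProdOne (centerShiftCommutator_le_centerProdOne h)

theorem inv_mulSingle_mul_mulSingle_mem_centerShiftCommutator [DecidableEq K] {a : M}
    (ha : a ∈ Subgroup.center M) (k k' : K) :
    (Pi.mulSingle k' a)⁻¹ * Pi.mulSingle k a ∈ centerShiftCommutator M K := by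
  refine Subgroup.subset_closure ⟨Pi.mulSingle k' a, ?_, k * k'⁻¹, ?_⟩
  · rw [Subgroup.center_pi]
    exact (Subgroup.mulSingle_mem_pi _ _).2 fun _ => ha
  · rw [shiftAut_mulSingle, inv_mul_cancel_right]

end Shift

section Quotient

variable {ι M : Type*} [DecidableEq ι] [Group M] {N : Subgroup (ι → M)} [N.Normal]

theorem commute_mk'_mulSingle_iff (hN : ∀ i (a : M), Pi.mulSingle i a ∈ N → a = 1)
    (x : ι → M) (i : ι) (a : M) :
    Commute (QuotientGroup.mk' N x) (QuotientGroup.mk' N (Pi.mulSingle i a)) ↔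
      Commute (x i) a := by
  rw [← commutatorElement_eq_one_iff_commute, ← commutatorElement_eq_one_iff_commute,
    ← map_commutatorElement, QuotientGroup.mk'_apply, QuotientGroup.eq_one_iff,
    Pi.commutatorElement_mulSingle]
  refine ⟨hN i _, fun h => ?_⟩
  rw [h, Pi.mulSingle_one]
  exact N.one_mem

theorem mk'_mem_center_iff [Finite ι] (hN : ∀ i (a : M), Pi.mulSingle i a ∈ N → a = 1)
    (x : ι → M) : QuotientGroup.mk' N x ∈ Subgroup.center ((ι → M) ⧸ N) ↔
      x ∈ Subgroup.center (ι → M) := by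
  simp only [Subgroup.center_pi, Subgroup.mem_pi, Set.mem_univ, forall_const,
    Subgroup.mem_center_iff]
  constructor
  · intro hx i a
    exact ((commute_mk'_mulSingle_iff hN x i a).1 (hx _).symm).symm.eq
  · intro hx y
    obtain ⟨g, rfl⟩ := QuotientGroup.mk'_surjective N y
    rw [← map_mul, ← map_mul]
    exact congrArg _ (funext fun i => hx i (g i))

theorem center_quotient_eq_map [Finite ι] (hN : ∀ i (a : M), Pi.mulSingle i a ∈ N → a = 1) :
    Subgroup.center ((ι → M) ⧸ N) =
      (Subgroup.center (ι → M)).map (QuotientGroup.mk' N) := by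
  ext y
  obtain ⟨x, rfl⟩ := QuotientGroup.mk'_surjective N y
  constructor
  · exact fun hx => Subgroup.mem_map_of_mem _ ((mk'_mem_center_iff hN x).1 hx)
  · rintro ⟨x', hx', hxx'⟩
    rw [← hxx']
    exact (mk'_mem_center_iff hN x').2 hx'

theorem map_range_mulSingle_inf_eq_inf_centralizer
    (hN : ∀ i (a : M), Pi.mulSingle i a ∈ N → a = 1)
    (hN' : ∀ i j (a : M), a ∈ Subgroup.center M →
      (Pi.mulSingle j a)⁻¹ * Pi.mulSingle i a ∈ N)
    {i j : ι} (hij : i ≠ j) :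
    (MonoidHom.mulSingle (fun _ : ι => M) i).range.map (QuotientGroup.mk' N) ⊓
        (MonoidHom.mulSingle (fun _ : ι => M) j).range.map (QuotientGroup.mk' N) =
      (MonoidHom.mulSingle (fun _ : ι => M) i).range.map (QuotientGroup.mk' N) ⊓
        Subgroup.centralizer
          ((MonoidHom.mulSingle (fun _ : ι => M) i).range.map (QuotientGroup.mk' N) :
            Set ((ι → M) ⧸ N)) := by
  apply le_antisymm
  · exact inf_le_inf_left _ fun y hy => Subgroup.mem_centralizer_iff.2 fun x hx =>
      (Subgroup.commute_of_mem_map_range_mulSingle _ hij hx hy).eq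
  · rintro _ ⟨⟨_, ⟨a, rfl⟩, rfl⟩, hc⟩
    have ha : a ∈ Subgroup.center M := Subgroup.mem_center_iff.2 fun m => by
      have := (commute_mk'_mulSingle_iff hN _ i m).1
        (hc _ ⟨_, ⟨m, rfl⟩, rfl⟩ : Commute _ _).symm
      rw [MonoidHom.mulSingle_apply, Pi.mulSingle_eq_same] at this
      exact this.symm.eq
    exact ⟨⟨_, ⟨a, rfl⟩, rfl⟩, _, ⟨a, rfl⟩, QuotientGroup.eq.2 (hN' i j a ha)⟩

end Quotient

theorem stmt_12_general {M K : Type*} [Group M] [Group K] [Finite K] [DecidableEq K]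
    (p : ℕ) (hM : IsExtraspecial p M)
    (N : Subgroup (K → M))
    (hNdef : N = Subgroup.closure {x : K → M | ∃ b ∈ commutator (K → M), ∃ k : K,
        x = b⁻¹ * shiftAut k b})
    [hN : N.Normal] :
    Subgroup.center (K → M) = commutator (K → M) ∧
    Subgroup.center ((K → M) ⧸ N) = commutator ((K → M) ⧸ N) ∧
    (⨆ k : K, ((MonoidHom.mulSingle (fun _ : K => M) k).range.map
        (QuotientGroup.mk' N)) = ⊤) ∧
    (∀ k k' : K, k ≠ k' →
      ∀ x ∈ ((MonoidHom.mulSingle (fun _ : K => M) k).range.map (QuotientGroup.mk' N)),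
      ∀ y ∈ ((MonoidHom.mulSingle (fun _ : K => M) k').range.map (QuotientGroup.mk' N)),
        Commute x y) ∧
    (∀ k k' : K, k ≠ k' →
      ((MonoidHom.mulSingle (fun _ : K => M) k).range.map (QuotientGroup.mk' N)) ⊓
        ((MonoidHom.mulSingle (fun _ : K => M) k').range.map (QuotientGroup.mk' N))
      = ((MonoidHom.mulSingle (fun _ : K => M) k).range.map (QuotientGroup.mk' N)) ⊓
          Subgroup.centralizer
            (((MonoidHom.mulSingle (fun _ : K => M) k).range.map
              (QuotientGroup.mk' N)) : Set ((K → M) ⧸ N))) := by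
  have hB : Subgroup.center (K → M) = commutator (K → M) := by
    rw [Subgroup.center_pi, commutator_pi, hM.2.1]
  have hN_eq : N = centerShiftCommutator M K := by
    rw [hNdef, ← hB, centerShiftCommutator]
  have hN₁ (k : K) (a : M) (h : Pi.mulSingle k a ∈ N) : a = 1 :=
    eq_one_of_mulSingle_mem_centerShiftCommutator (hN_eq ▸ h)
  have hN₂ (k k' : K) (a : M) (ha : a ∈ Subgroup.center M) :
      (Pi.mulSingle k' a)⁻¹ * Pi.mulSingle k a ∈ N :=
    hN_eq ▸ inv_mulSingle_mul_mulSingle_mem_centerShiftCommutator ha k k'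
  refine ⟨hB, ?_, Subgroup.iSup_map_range_mulSingle (QuotientGroup.mk'_surjective N),
    fun k k' hk _ hx _ hy => Subgroup.commute_of_mem_map_range_mulSingle _ hk hx hy,
    fun k k' hk => map_range_mulSingle_inf_eq_inf_centralizer hN₁ hN₂ hk⟩
  rw [center_quotient_eq_map hN₁, hB,
    map_commutator_of_surjective _ (QuotientGroup.mk'_surjective N)]

/-- For `M` an extra-special `p`-group and `K` a finite group, with `B = M^{|K|}` the
base of the wreath product `M ≀ K`: the center of `B` is `B'`, and in the quotient
`B₀ = B/[B',K]` one again has `Z(B₀) = B₀'`, so that `B₀` is a central product of the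
images of the direct factors. -/
theorem stmt_12 {M K : Type*} [Group M] [Finite M] [Group K] [Finite K] [DecidableEq K]
    (p : ℕ) (hp : p.Prime) (hM : IsExtraspecial p M)
    (N : Subgroup (K → M))
    (hNdef : N = Subgroup.closure {x : K → M | ∃ b ∈ commutator (K → M), ∃ k : K,
        x = b⁻¹ * shiftAut k b})
    [hN : N.Normal] :
    Subgroup.center (K → M) = commutator (K → M) ∧
    Subgroup.center ((K → M) ⧸ N) = commutator ((K → M) ⧸ N) ∧
    (⨆ k : K, ((MonoidHom.mulSingle (fun _ : K => M) k).range.map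
        (QuotientGroup.mk' N)) = ⊤) ∧
    (∀ k k' : K, k ≠ k' →
      ∀ x ∈ ((MonoidHom.mulSingle (fun _ : K => M) k).range.map (QuotientGroup.mk' N)),
      ∀ y ∈ ((MonoidHom.mulSingle (fun _ : K => M) k').range.map (QuotientGroup.mk' N)),
        Commute x y) ∧
    (∀ k k' : K, k ≠ k' →
      ((MonoidHom.mulSingle (fun _ : K => M) k).range.map (QuotientGroup.mk' N)) ⊓
        ((MonoidHom.mulSingle (fun _ : K => M) k').range.map (QuotientGroup.mk' N))
      = ((MonoidHom.mulSingle (fun _ : K => M) k).range.map (QuotientGroup.mk' N)) ⊓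
          Subgroup.centralizer
            (((MonoidHom.mulSingle (fun _ : K => M) k).range.map
              (QuotientGroup.mk' N)) : Set ((K → M) ⧸ N))) :=
  stmt_12_general p hM N hNdef (hN := hN)
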